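/- The weighted integrals of the derivatives of φ₀ over the reference convex quadrilateral (entries of the coefficient matrix in the proof of Lemma 3.1): ∫_Q (∂φ₀/∂η)·ξ dλ = −8αβ/D, ∫_Q (∂φ₀/∂ξ)·ξ dλ = (4α² − 12β² − 12)/D, ∫_Q (∂φ₀/∂η)·η dλ = (−12α² + 4β² − 12)/D, and ∫_Q (∂φ₀/∂ξ)·η dλ = −8αβ/D, where D = α² + β² + 3. -/

import Mathlib

/-!
Both partial derivatives of φ₀ are affine, so each integrand is a quadratic polynomial.
The diagonal a₁a₃ meets the diagonal a₂a₄ at (−β, −α) and cuts Q into two triangles,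
of areas 2(1 − α − β) and 2(1 + α + β). On a triangle T the edge-midpoint rule
∫_T f = |T|/3 · (f(m₁) + f(m₂) + f(m₃)) is exact for quadratic f: this is checked on
the unit triangle by iterated integration and transported to T by the affine change
of variables.
-/

open MeasureTheory

noncomputable section

/-- Vertex a₁ of the reference convex quadrilateral (points written as (η, ξ)). -/
def a1 (α β : ℝ) : ℝ × ℝ := (-1 - α, 1 - β)

/-- Vertex a₂. -/
def a2 (α β : ℝ) : ℝ × ℝ := (-1 + α, -1 + β)

/-- Vertex a₃. -/
def a3 (α β : ℝ) : ℝ × ℝ := (1 - α, -1 - β)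

/-- Vertex a₄. -/
def a4 (α β : ℝ) : ℝ × ℝ := (1 + α, 1 + β)

/-- The reference convex quadrilateral Q = conv{a₁, a₂, a₃, a₄}. -/
def Quad (α β : ℝ) : Set (ℝ × ℝ) :=
  convexHull ℝ {a1 α β, a2 α β, a3 α β, a4 α β}

/-- Average of `u` over the segment from `P` to `R`:
    ⨍ u = ∫_{t ∈ [0,1]} u((1−t)P + tR) dt. -/
def edgeAvg (P R : ℝ × ℝ) (u : ℝ × ℝ → ℝ) : ℝ :=
  ∫ t in (0:ℝ)..1, u ((1 - t) • P + t • R)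

/-- Average of `u` over the quadrilateral Q: (∫_Q u dλ)/λ(Q). -/
def quadAvg (α β : ℝ) (u : ℝ × ℝ → ℝ) : ℝ :=
  (∫ p in Quad α β, u p) / (volume (Quad α β)).toReal

/-- The basis function φ₀ of the QLTZ element:
φ₀ = −3(3ξ² + 3η² − 2αξ − 2βη − (4 + α² + β²))/(2(α² + β² + 3)),
with ξ(p) = p.2 and η(p) = p.1. -/
def phi0 (α β : ℝ) (p : ℝ × ℝ) : ℝ :=
  -3 * (3 * p.2 ^ 2 + 3 * p.1 ^ 2 - 2 * α * p.2 - 2 * β * p.1 - (4 + α ^ 2 + β ^ 2)) /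
    (2 * (α ^ 2 + β ^ 2 + 3))

/-- φ₁ = −(3/4)ξ² + ((β−1)/2)η + (3+β²)/4 − ((β²−β+3)/6)φ₀. -/
def phi1 (α β : ℝ) (p : ℝ × ℝ) : ℝ :=
  -(3 / 4) * p.2 ^ 2 + (β - 1) / 2 * p.1 + (3 + β ^ 2) / 4 -
    (β ^ 2 - β + 3) / 6 * phi0 α β p

/-- φ₂ = −(3/4)η² + ((α−1)/2)ξ + (3+α²)/4 − ((α²−α+3)/6)φ₀. -/
def phi2 (α β : ℝ) (p : ℝ × ℝ) : ℝ :=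
  -(3 / 4) * p.1 ^ 2 + (α - 1) / 2 * p.2 + (3 + α ^ 2) / 4 -
    (α ^ 2 - α + 3) / 6 * phi0 α β p

/-- φ₃ = −(3/4)ξ² + ((β+1)/2)η + (3+β²)/4 − ((β²+β+3)/6)φ₀. -/
def phi3 (α β : ℝ) (p : ℝ × ℝ) : ℝ :=
  -(3 / 4) * p.2 ^ 2 + (β + 1) / 2 * p.1 + (3 + β ^ 2) / 4 -
    (β ^ 2 + β + 3) / 6 * phi0 α β p

/-- φ₄ = −(3/4)η² + ((α+1)/2)ξ + (3+α²)/4 − ((α²+α+3)/6)φ₀. -/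
def phi4 (α β : ℝ) (p : ℝ × ℝ) : ℝ :=
  -(3 / 4) * p.1 ^ 2 + (α + 1) / 2 * p.2 + (3 + α ^ 2) / 4 -
    (α ^ 2 + α + 3) / 6 * phi0 α β p

open Set

def IsAffine (f : ℝ × ℝ → ℝ) : Prop :=
  ∃ a b c : ℝ, ∀ p, f p = a + b * p.1 + c * p.2

def IsQuadratic (f : ℝ × ℝ → ℝ) : Prop :=
  ∃ a b c d e k : ℝ, ∀ p,
    f p = a + b * p.1 + c * p.2 + d * p.1 ^ 2 + e * (p.1 * p.2) + k * p.2 ^ 2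

lemma IsQuadratic.continuous {f : ℝ × ℝ → ℝ} (hf : IsQuadratic f) : Continuous f := by
  obtain ⟨a, b, c, d, e, k, hf⟩ := hf
  exact (continuous_congr hf).mpr (by fun_prop)

lemma isAffine_fst : IsAffine fun p => p.1 := ⟨0, 1, 0, fun p => by ring⟩

lemma isAffine_snd : IsAffine fun p => p.2 := ⟨0, 0, 1, fun p => by ring⟩

lemma IsAffine.mul {f g : ℝ × ℝ → ℝ} (hf : IsAffine f) (hg : IsAffine g) :
    IsQuadratic fun p => f p * g p := by
  obtain ⟨a, b, c, hf⟩ := hf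
  obtain ⟨a', b', c', hg⟩ := hg
  exact ⟨a * a', a * b' + b * a', a * c' + c * a', b * b', b * c' + c * b', c * c',
    fun p => by simp only [hf, hg]; ring⟩

lemma IsQuadratic.comp_affine {f : ℝ × ℝ → ℝ} (hf : IsQuadratic f) (P u v : ℝ × ℝ) :
    IsQuadratic fun q => f (P + q.1 • u + q.2 • v) := by
  obtain ⟨a, b, c, d, e, k, hf⟩ := hf
  refine ⟨a + b * P.1 + c * P.2 + d * P.1 ^ 2 + e * (P.1 * P.2) + k * P.2 ^ 2,
    b * u.1 + c * u.2 + 2 * d * P.1 * u.1 + e * (P.1 * u.2 + P.2 * u.1) + 2 * k * P.2 * u.2,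
    b * v.1 + c * v.2 + 2 * d * P.1 * v.1 + e * (P.1 * v.2 + P.2 * v.1) + 2 * k * P.2 * v.2,
    d * u.1 ^ 2 + e * u.1 * u.2 + k * u.2 ^ 2,
    2 * d * u.1 * v.1 + e * (u.1 * v.2 + u.2 * v.1) + 2 * k * u.2 * v.2,
    d * v.1 ^ 2 + e * v.1 * v.2 + k * v.2 ^ 2, fun q => ?_⟩
  simp only [hf, Prod.fst_add, Prod.snd_add, Prod.smul_fst, Prod.smul_snd, smul_eq_mul]
  ring

lemma integral_cubic_of_eq {f : ℝ → ℝ} {c₀ c₁ c₂ c₃ : ℝ}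
    (hf : ∀ y, f y = c₀ + c₁ * y + c₂ * y ^ 2 + c₃ * y ^ 3) (a b : ℝ) :
    ∫ y in a..b, f y = c₀ * (b - a) + c₁ * (b ^ 2 - a ^ 2) / 2 + c₂ * (b ^ 3 - a ^ 3) / 3 +
      c₃ * (b ^ 4 - a ^ 4) / 4 := by
  have hF := fun y => ((((hasDerivAt_id y).const_mul c₀).add
    (((hasDerivAt_pow 2 y).const_mul c₁).div_const 2)).add
      (((hasDerivAt_pow 3 y).const_mul c₂).div_const 3)).add
      (((hasDerivAt_pow 4 y).const_mul c₃).div_const 4)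
  rw [intervalIntegral.integral_eq_sub_of_hasDerivAt (fun y _ => (hF y).congr_deriv
      (by simp only [hf, mul_one, Nat.cast_ofNat, Nat.add_one_sub_one, pow_one]; ring))
    (((continuous_congr hf).mpr (by fun_prop)).intervalIntegrable a b)]
  simp only [id_eq, Pi.add_apply]
  ring

lemma setIntegral_region_eq_integral_setIntegral {E : Type*} [NormedAddCommGroup E]
    [NormedSpace ℝ E] {s : Set ℝ} (hs : MeasurableSet s) {f g : ℝ → ℝ} (hf : Measurable f)
    (hg : Measurable g) {h : ℝ × ℝ → E}
    (hh : IntegrableOn h {p | p.1 ∈ s ∧ p.2 ∈ Icc (f p.1) (g p.1)}) :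
    ∫ p in {p | p.1 ∈ s ∧ p.2 ∈ Icc (f p.1) (g p.1)}, h p =
      ∫ x in s, ∫ y in Icc (f x) (g x), h (x, y) := by
  have hm : MeasurableSet {p : ℝ × ℝ | p.1 ∈ s ∧ p.2 ∈ Icc (f p.1) (g p.1)} :=
    (measurable_fst hs).inter
      ((measurableSet_le (hf.comp measurable_fst) measurable_snd).inter
        (measurableSet_le measurable_snd (hg.comp measurable_fst)))
  rw [← integral_indicator hm, ← integral_indicator hs, Measure.volume_eq_prod,
    integral_prod _ ((integrable_indicator_iff hm).2 hh)]
  congr 1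
  funext x
  by_cases hx : x ∈ s
  · rw [indicator_of_mem hx, ← integral_indicator measurableSet_Icc]
    congr 1
    funext y
    simp only [indicator, mem_ofPred_eq, hx, true_and]
  · simp [indicator, hx]

def unitTriangle : Set (ℝ × ℝ) := convexHull ℝ {0, (1, 0), (0, 1)}

lemma isCompact_unitTriangle : IsCompact unitTriangle := (toFinite _).isCompact_convexHull ℝ

lemma unitTriangle_eq : unitTriangle = {p | p.1 ∈ Icc 0 1 ∧ p.2 ∈ Icc 0 (1 - p.1)} := by
  apply Subset.antisymm
  · refine convexHull_min ?_ ?_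
    · rintro p (rfl | rfl | rfl) <;> norm_num
    · rintro p ⟨⟨hp₀, -⟩, hp₂, hp₃⟩ q ⟨⟨hq₀, -⟩, hq₂, hq₃⟩
        a b ha hb hab
      simp only [mem_ofPred_eq, mem_Icc, Prod.fst_add, Prod.snd_add, Prod.smul_fst,
        Prod.smul_snd, smul_eq_mul]
      refine ⟨⟨by positivity, ?_⟩, by positivity, ?_⟩ <;> nlinarith
  · rintro p ⟨⟨hp₀, -⟩, hp₂, hp₃⟩
    have := (convex_convexHull ℝ ({0, (1, 0), (0, 1)} : Set (ℝ × ℝ))).sum_mem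
      (t := Finset.univ) (w := ![1 - p.1 - p.2, p.1, p.2]) (z := ![0, (1, 0), (0, 1)])
      (by simp [Fin.forall_fin_succ]; refine ⟨?_, ?_, ?_⟩ <;> linarith)
      (by simp [Fin.sum_univ_three]; ring)
      (fun i _ => subset_convexHull ℝ _ (by fin_cases i <;> simp))
    simpa [unitTriangle, Fin.sum_univ_three] using this

lemma setIntegral_unitTriangle_of_isQuadratic {h : ℝ × ℝ → ℝ} (hh : IsQuadratic h) :
    ∫ q in unitTriangle, h q = (h (1 / 2, 0) + h (0, 1 / 2) + h (1 / 2, 1 / 2)) / 6 := by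
  have hint : IntegrableOn h unitTriangle :=
    hh.continuous.continuousOn.integrableOn_compact isCompact_unitTriangle
  obtain ⟨a, b, c, d, e, k, hh⟩ := hh
  have hinner : ∀ x ∈ Icc (0 : ℝ) 1, ∫ y in Icc 0 (1 - x), h (x, y) =
      (a + b * x + d * x ^ 2) * (1 - x) + (c + e * x) * (1 - x) ^ 2 / 2 +
        k * (1 - x) ^ 3 / 3 := by
    intro x hx
    rw [integral_Icc_eq_integral_Ioc, ← intervalIntegral.integral_of_le (by linarith [hx.2]),
      integral_cubic_of_eq (c₀ := a + b * x + d * x ^ 2) (c₁ := c + e * x) (c₂ := k)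
        (c₃ := 0) (fun y => by rw [hh]; ring)]
    ring
  rw [unitTriangle_eq, setIntegral_region_eq_integral_setIntegral measurableSet_Icc
      measurable_const (by fun_prop) (unitTriangle_eq ▸ hint),
    setIntegral_congr_fun measurableSet_Icc hinner, integral_Icc_eq_integral_Ioc,
    ← intervalIntegral.integral_of_le zero_le_one,
    integral_cubic_of_eq (c₀ := a + c / 2 + k / 3) (c₁ := b - a + e / 2 - c - k)
      (c₂ := d - b + c / 2 - e + k) (c₃ := -d + e / 2 - k / 3) (fun x => by ring)]
  simp only [hh]
  ring

lemma det_fst_smulRight_add_snd_smulRight (u v : ℝ × ℝ) :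
    ((ContinuousLinearMap.fst ℝ ℝ ℝ).smulRight u +
      (ContinuousLinearMap.snd ℝ ℝ ℝ).smulRight v).det = u.1 * v.2 - u.2 * v.1 := by
  rw [ContinuousLinearMap.det, ← LinearMap.det_toMatrix (Module.Basis.finTwoProd ℝ),
    Matrix.det_fin_two]
  simp [LinearMap.toMatrix_apply, Module.Basis.finTwoProd]
  ring

lemma setIntegral_triangle_eq {F : Type*} [NormedAddCommGroup F] [NormedSpace ℝ F]
    (P Q R : ℝ × ℝ) (hPQR : (Q.1 - P.1) * (R.2 - P.2) - (Q.2 - P.2) * (R.1 - P.1) ≠ 0)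
    (g : ℝ × ℝ → F) :
    ∫ p in convexHull ℝ {P, Q, R}, g p =
      |(Q.1 - P.1) * (R.2 - P.2) - (Q.2 - P.2) * (R.1 - P.1)| •
        ∫ q in unitTriangle, g (P + q.1 • (Q - P) + q.2 • (R - P)) := by
  set L := (ContinuousLinearMap.fst ℝ ℝ ℝ).smulRight (Q - P) +
    (ContinuousLinearMap.snd ℝ ℝ ℝ).smulRight (R - P)
  have hL : ∀ q : ℝ × ℝ, P + L q = P + q.1 • (Q - P) + q.2 • (R - P) := fun q => by
    simp [L, add_assoc]
  have hdet : L.det = (Q.1 - P.1) * (R.2 - P.2) - (Q.2 - P.2) * (R.1 - P.1) :=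
    det_fst_smulRight_add_snd_smulRight _ _
  have himage : (fun q => P + L q) '' unitTriangle = convexHull ℝ {P, Q, R} := by
    have hA : (fun q => P + L q) = ⇑((L : ℝ × ℝ →ₗ[ℝ] ℝ × ℝ).toAffineMap +
        AffineMap.const ℝ (ℝ × ℝ) P) := by
      funext q
      simp [add_comm]
    rw [unitTriangle, hA, AffineMap.image_convexHull, ← hA]
    simp [image_insert_eq, hL]
  have hinj : Function.Injective fun q => P + L q :=
    (add_right_injective P).comp (LinearMap.equivOfDetNeZero (L : ℝ × ℝ →ₗ[ℝ] ℝ × ℝ)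
      (by rwa [← ContinuousLinearMap.det, hdet])).injective
  rw [← himage, integral_image_eq_integral_abs_det_fderiv_smul volume
    isCompact_unitTriangle.isClosed.measurableSet
    (fun q _ => ((L.hasFDerivAt).const_add P).hasFDerivWithinAt) hinj.injOn, hdet,
    integral_smul]
  simp_rw [hL]

theorem setIntegral_triangle_of_isQuadratic {f : ℝ × ℝ → ℝ} (hf : IsQuadratic f)
    (P Q R : ℝ × ℝ) (hPQR : (Q.1 - P.1) * (R.2 - P.2) - (Q.2 - P.2) * (R.1 - P.1) ≠ 0) :
    ∫ p in convexHull ℝ {P, Q, R}, f p =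
      |(Q.1 - P.1) * (R.2 - P.2) - (Q.2 - P.2) * (R.1 - P.1)| / 6 *
        (f (midpoint ℝ P Q) + f (midpoint ℝ Q R) + f (midpoint ℝ P R)) := by
  rw [setIntegral_triangle_eq P Q R hPQR, smul_eq_mul,
    setIntegral_unitTriangle_of_isQuadratic (hf.comp_affine P (Q - P) (R - P))]
  have hPQ : P + (1 / 2 : ℝ) • (Q - P) + (0 : ℝ) • (R - P) = midpoint ℝ P Q := by
    rw [midpoint_eq_smul_add, invOf_eq_inv]; module
  have hQR : P + (1 / 2 : ℝ) • (Q - P) + (1 / 2 : ℝ) • (R - P) = midpoint ℝ Q R := by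
    rw [midpoint_eq_smul_add, invOf_eq_inv]; module
  have hPR : P + (0 : ℝ) • (Q - P) + (1 / 2 : ℝ) • (R - P) = midpoint ℝ P R := by
    rw [midpoint_eq_smul_add, invOf_eq_inv]; module
  rw [hPQ, hQR, hPR]
  ring

theorem Wbtw.wbtw_or_wbtw_of_wbtw {E : Type*} [AddCommGroup E] [Module ℝ E] {b y m d : E}
    (hy : Wbtw ℝ b y d) (hm : Wbtw ℝ b m d) : Wbtw ℝ b y m ∨ Wbtw ℝ m y d := by
  rcases eq_or_ne b d with rfl | hbd
  · rw [wbtw_self_iff] at hy hm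
    rw [hy, hm]
    exact Or.inl (wbtw_self_left ℝ b b)
  · refine (wbtw_total_of_sameRay_vsub_left (hy.sameRay_vsub_left.trans
      hm.sameRay_vsub_left.symm fun h => ?_)).imp id hy.trans_left_right
    exact absurd (vsub_eq_zero_iff_eq.1 h).symm hbd

theorem convexHull_quadrilateral_eq_union {E : Type*} [AddCommGroup E] [Module ℝ E]
    {a b c d m : E} (hac : m ∈ segment ℝ a c) (hbd : m ∈ segment ℝ b d) :
    convexHull ℝ {a, b, c, d} = convexHull ℝ {a, b, c} ∪ convexHull ℝ {a, c, d} := by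
  refine Subset.antisymm ?_ (union_subset (convexHull_mono (by intro; simp; tauto))
    (convexHull_mono (by intro; simp; tauto)))
  have hsplit : ({a, b, c, d} : Set E) = {b, d} ∪ {a, c} := by ext; simp; tauto
  rw [hsplit, convexHull_union (insert_nonempty _ _) (insert_nonempty _ _), convexHull_pair,
    convexHull_pair]
  intro x hx
  obtain ⟨y, hy, z, hz, hx⟩ := mem_convexJoin.1 hx
  rw [mem_segment_iff_wbtw] at hy hbd
  rcases hy.wbtw_or_wbtw_of_wbtw hbd with hy | hy
  · left
    have hac' : segment ℝ a c ⊆ convexHull ℝ {a, b, c} :=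
      segment_subset_convexHull (by simp) (by simp)
    refine (convex_convexHull ℝ _).segment_subset ?_ (hac' hz) hx
    exact (convex_convexHull ℝ _).segment_subset (subset_convexHull ℝ _ (by simp)) (hac' hac)
      (mem_segment_iff_wbtw.2 hy)
  · right
    have hac' : segment ℝ a c ⊆ convexHull ℝ {a, c, d} :=
      segment_subset_convexHull (by simp) (by simp)
    refine (convex_convexHull ℝ _).segment_subset ?_ (hac' hz) hx
    exact (convex_convexHull ℝ _).segment_subset (hac' hac) (subset_convexHull ℝ _ (by simp))
      (mem_segment_iff_wbtw.2 hy)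

theorem LinearMap.addHaar_preimage_singleton {E : Type*} [NormedAddCommGroup E]
    [NormedSpace ℝ E] [FiniteDimensional ℝ E] [MeasurableSpace E] [BorelSpace E]
    (μ : Measure E) [μ.IsAddHaarMeasure] {L : E →ₗ[ℝ] ℝ} (hL : L ≠ 0) (c : ℝ) :
    μ (L ⁻¹' {c}) = 0 := by
  obtain ⟨k, -, -, hmap⟩ := L.exists_map_addHaar_eq_smul_addHaar' μ volume
    (L.surjective_of_ne_zero hL)
  rw [← Measure.map_apply L.continuous_of_finiteDimensional.measurable
    (measurableSet_singleton c), hmap]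
  simp

lemma hasFDerivAt_phi0 (α β : ℝ) (p : ℝ × ℝ) :
    HasFDerivAt (phi0 α β)
      (((3 * β - 9 * p.1) / (α ^ 2 + β ^ 2 + 3)) • ContinuousLinearMap.fst ℝ ℝ ℝ +
        ((3 * α - 9 * p.2) / (α ^ 2 + β ^ 2 + 3)) • ContinuousLinearMap.snd ℝ ℝ ℝ)
      p := by
  have h1 : HasFDerivAt (fun q : ℝ × ℝ => q.1) (ContinuousLinearMap.fst ℝ ℝ ℝ) p :=
    hasFDerivAt_fst
  have h2 : HasFDerivAt (fun q : ℝ × ℝ => q.2) (ContinuousLinearMap.snd ℝ ℝ ℝ) p :=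
    hasFDerivAt_snd
  have H := (((((((h2.pow 2).const_mul 3).add ((h1.pow 2).const_mul 3)).sub
      (h2.const_mul (2 * α))).sub (h1.const_mul (2 * β))).sub_const
      (4 + α ^ 2 + β ^ 2)).const_mul (-3)).mul_const (2 * (α ^ 2 + β ^ 2 + 3))⁻¹
  have hD : α ^ 2 + β ^ 2 + 3 ≠ 0 := by positivity
  refine (H.congr_fderiv ?_).congr_of_eventuallyEq
    (Filter.Eventually.of_forall fun q => ?_)
  · ext <;> simp <;> field_simp <;> ring
  · simp only [phi0, Pi.add_apply, Pi.sub_apply]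
    ring

lemma fderiv_phi0_apply (α β : ℝ) (p v : ℝ × ℝ) :
    fderiv ℝ (phi0 α β) p v =
      ((3 * β - 9 * p.1) * v.1 + (3 * α - 9 * p.2) * v.2) / (α ^ 2 + β ^ 2 + 3) := by
  rw [(hasFDerivAt_phi0 α β p).fderiv]
  simp only [add_apply, smul_apply,
    ContinuousLinearMap.coe_fst', ContinuousLinearMap.coe_snd', smul_eq_mul]
  ring

lemma isAffine_fderiv_phi0 (α β : ℝ) (v : ℝ × ℝ) :
    IsAffine fun p => fderiv ℝ (phi0 α β) p v :=
  ⟨(3 * β * v.1 + 3 * α * v.2) / (α ^ 2 + β ^ 2 + 3), -9 * v.1 / (α ^ 2 + β ^ 2 + 3),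
    -9 * v.2 / (α ^ 2 + β ^ 2 + 3), fun p => by simp only [fderiv_phi0_apply]; ring⟩

section Quad

variable {α β : ℝ}

lemma quad_eq_union (hα : 0 < α) (hβ : 0 < β) (hαβ : α + β < 1) :
    Quad α β =
      convexHull ℝ {a1 α β, a2 α β, a3 α β} ∪
        convexHull ℝ {a1 α β, a3 α β, a4 α β} := by
  refine convexHull_quadrilateral_eq_union (m := (-β, -α))
    ⟨(1 - α + β) / 2, (1 + α - β) / 2, by linarith, by linarith, by ring, ?_⟩
    ⟨(1 + α + β) / 2, (1 - α - β) / 2, by linarith, by linarith, by ring, ?_⟩ <;>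
  · ext <;> simp only [a1, a2, a3, a4, Prod.smul_mk, smul_eq_mul, Prod.mk_add_mk] <;> ring

lemma aedisjoint_quad_triangles (h₁ : -1 ≤ α + β) (h₂ : α + β ≤ 1) :
    AEDisjoint volume (convexHull ℝ {a1 α β, a2 α β, a3 α β})
      (convexHull ℝ {a1 α β, a3 α β, a4 α β}) := by
  set L : ℝ × ℝ →ₗ[ℝ] ℝ := LinearMap.fst ℝ ℝ ℝ + LinearMap.snd ℝ ℝ ℝ
  have hL : L ≠ 0 := fun h => by simpa [L] using LinearMap.congr_fun h (1, 0)
  have hle : convexHull ℝ {a1 α β, a2 α β, a3 α β} ⊆ {p | L p ≤ -(α + β)} :=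
    convexHull_min (by rintro p (rfl | rfl | rfl) <;> simp [L, a1, a2, a3] <;> linarith)
      (convex_halfSpace_le L.isLinear _)
  have hge : convexHull ℝ {a1 α β, a3 α β, a4 α β} ⊆ {p | -(α + β) ≤ L p} :=
    convexHull_min (by rintro p (rfl | rfl | rfl) <;> simp [L, a1, a3, a4] <;> linarith)
      (convex_halfSpace_ge L.isLinear _)
  exact measure_mono_null (fun p hp => le_antisymm (hle hp.1) (hge hp.2))
    (L.addHaar_preimage_singleton volume hL _)

theorem setIntegral_quad_of_isQuadratic (hα : 0 < α) (hβ : 0 < β) (hαβ : α + β < 1)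
    {f : ℝ × ℝ → ℝ} (hf : IsQuadratic f) :
    ∫ p in Quad α β, f p =
      2 * (1 - α - β) / 3 * (f (midpoint ℝ (a1 α β) (a2 α β)) +
        f (midpoint ℝ (a2 α β) (a3 α β)) + f (midpoint ℝ (a1 α β) (a3 α β))) +
      2 * (1 + α + β) / 3 * (f (midpoint ℝ (a1 α β) (a3 α β)) +
        f (midpoint ℝ (a3 α β) (a4 α β)) + f (midpoint ℝ (a1 α β) (a4 α β))) := by
  have hint : ∀ P Q R : ℝ × ℝ, IntegrableOn f (convexHull ℝ {P, Q, R}) := fun P Q R =>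
    hf.continuous.continuousOn.integrableOn_compact ((toFinite _).isCompact_convexHull ℝ)
  have hdet₁ : ((a2 α β).1 - (a1 α β).1) * ((a3 α β).2 - (a1 α β).2) -
      ((a2 α β).2 - (a1 α β).2) * ((a3 α β).1 - (a1 α β).1) = 4 * (1 - α - β) := by
    simp only [a1, a2, a3]; ring
  have hdet₂ : ((a3 α β).1 - (a1 α β).1) * ((a4 α β).2 - (a1 α β).2) -
      ((a3 α β).2 - (a1 α β).2) * ((a4 α β).1 - (a1 α β).1) = 4 * (1 + α + β) := by
    simp only [a1, a3, a4]; ring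
  have hpos₁ : 0 < 4 * (1 - α - β) := by linarith
  have hpos₂ : 0 < 4 * (1 + α + β) := by linarith
  rw [quad_eq_union hα hβ hαβ, setIntegral_union₀
      (aedisjoint_quad_triangles (by linarith) (by linarith))
      ((toFinite _).isCompact_convexHull ℝ).isClosed.measurableSet.nullMeasurableSet
      (hint _ _ _) (hint _ _ _),
    setIntegral_triangle_of_isQuadratic hf _ _ _ (hdet₁ ▸ hpos₁.ne'),
    setIntegral_triangle_of_isQuadratic hf _ _ _ (hdet₂ ▸ hpos₂.ne'), hdet₁, hdet₂,
    abs_of_pos hpos₁, abs_of_pos hpos₂]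
  ring

end Quad

/-- Weighted integrals of the derivatives of φ₀ over the reference convex quadrilateral
(entries of the coefficient matrix in the proof of Lemma 3.1), with D = α² + β² + 3,
ξ(p) = p.2, η(p) = p.1, and ∂/∂η, ∂/∂ξ the partial derivatives in the first and second
coordinate directions. -/
theorem phi0_weighted_integrals (α β : ℝ) (hα : 0 < α) (hβ : 0 < β) (hαβ : α + β < 1) :
    (∫ p in Quad α β, fderiv ℝ (phi0 α β) p (1, 0) * p.2) =
      -8 * α * β / (α ^ 2 + β ^ 2 + 3) ∧
    (∫ p in Quad α β, fderiv ℝ (phi0 α β) p (0, 1) * p.2) =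
      (4 * α ^ 2 - 12 * β ^ 2 - 12) / (α ^ 2 + β ^ 2 + 3) ∧
    (∫ p in Quad α β, fderiv ℝ (phi0 α β) p (1, 0) * p.1) =
      (-12 * α ^ 2 + 4 * β ^ 2 - 12) / (α ^ 2 + β ^ 2 + 3) ∧
    (∫ p in Quad α β, fderiv ℝ (phi0 α β) p (0, 1) * p.1) =
      -8 * α * β / (α ^ 2 + β ^ 2 + 3) := by
  have hD : α ^ 2 + β ^ 2 + 3 ≠ 0 := by positivity
  have hξ := fun v => setIntegral_quad_of_isQuadratic hα hβ hαβ
    ((isAffine_fderiv_phi0 α β v).mul isAffine_snd)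
  have hη := fun v => setIntegral_quad_of_isQuadratic hα hβ hαβ
    ((isAffine_fderiv_phi0 α β v).mul isAffine_fst)
  refine ⟨(hξ _).trans ?_, (hξ _).trans ?_, (hη _).trans ?_, (hη _).trans ?_⟩ <;>
  · simp only [fderiv_phi0_apply, midpoint_eq_smul_add, invOf_eq_inv, a1, a2, a3, a4,
      Prod.mk_add_mk, Prod.smul_mk, smul_eq_mul]
    field_simp
    ring
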